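/- Let (L, L̄) ∈ 𝔄 with L = Λ + u₀ + u₋₁Λ⁻¹ + ⋯ (i.e. L_{≥1} = Λ, with u_k denoting the coefficient of Λ^k in L, u₁ = 1, and u_k := 0 for k > 1) and L̄_{≤−2} = 0. Fix integers i, j ≤ 0 and n, m ∈ ℤ, and let ξ = (Λ^{−i}δ_n, 0) and η = (Λ^{−j}δ_m, 0), where δ_m : ℤ → ℂ is 1 at m and 0 elsewhere. Then the first Poisson bracket of the coordinate functions u_i(n) and u_j(m) is given by ⟨ξ, P₁(L, L̄) η⟩ = u_{i+j}(m) δ(n − m − j) − u_{i+j}(n) δ(n − m + i), where δ(k) = 1 if k = 0 and 0 otherwise (in particular the right-hand side vanishes when i + j > 1). -/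
import Mathlib


noncomputable section

/-- Formal difference operators `X = ∑ₖ aₖ Λᵏ`, encoded by their coefficient functions:
`X k n` is the value `aₖ(n)` of the coefficient of `Λᵏ`. -/
abbrev DOp : Type := ℤ → ℤ → ℂ

/-- Product of difference operators, determined by `Λᵏ a = (a ∘ (·+k)) Λᵏ`:
the coefficient of `Λᵐ` in `X*Y` at `n` is `∑_{k+l=m} aₖ(n) bₗ(n+k)`. -/
def dmul (X Y : DOp) : DOp := fun m n => ∑ᶠ k : ℤ, X k n * Y (m - k) (n + k)

/-- Commutator `[X,Y] = XY - YX`. -/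
def dcomm (X Y : DOp) : DOp := dmul X Y - dmul Y X

/-- Truncation `X_{≥K}`. -/
def truncGe (K : ℤ) (X : DOp) : DOp := fun k n => if K ≤ k then X k n else 0
/-- Truncation `X_{≤K}`. -/
def truncLe (K : ℤ) (X : DOp) : DOp := fun k n => if k ≤ K then X k n else 0
/-- Truncation `X_{>K}`. -/
def truncGt (K : ℤ) (X : DOp) : DOp := fun k n => if K < k then X k n else 0
/-- Truncation `X_{<K}`. -/
def truncLt (K : ℤ) (X : DOp) : DOp := fun k n => if k < K then X k n else 0

/-- `X₊ := X_{≥0}`. -/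
def dpos (X : DOp) : DOp := truncGe 0 X

/-- `X₋ := X_{<0}`. -/
def dneg (X : DOp) : DOp := truncLt 0 X

/-- The shift operator `Λ`. -/
def dlam : DOp := fun k _ => if k = 1 then 1 else 0

/-- The identity operator. -/
def done : DOp := fun k _ => if k = 0 then 1 else 0

/-- Powers of a difference operator. -/
def dpow (X : DOp) : ℕ → DOp
  | 0 => done
  | n + 1 => dmul (dpow X n) X

/-- The residue: coefficient of `Λ⁰`. -/
def dres (X : DOp) : ℤ → ℂ := X 0

/-- The trace: `tr X = ∑ₙ a₀(n)`. -/
def dtr (X : DOp) : ℂ := ∑ᶠ n : ℤ, X 0 n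

/-- `A⁺`: coefficients vanish in all sufficiently high degrees. -/
def IsUpper (X : DOp) : Prop := ∃ K : ℤ, ∀ k : ℤ, K < k → X k = 0

/-- `A⁻`: coefficients vanish in all sufficiently low degrees. -/
def IsLower (X : DOp) : Prop := ∃ K : ℤ, ∀ k : ℤ, k < K → X k = 0

/-- `A⁰`: only finitely many nonzero coefficient functions. -/
def IsBdd (X : DOp) : Prop := {k : ℤ | X k ≠ 0}.Finite

/-- All coefficient functions finitely supported (finite total support). -/
def FinSuppOp (X : DOp) : Prop := (Function.support fun pr : ℤ × ℤ => X pr.1 pr.2).Finite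

/-- Membership in `𝔄 = A⁺ ⊕ A⁻`. -/
def InA (x : DOp × DOp) : Prop := IsUpper x.1 ∧ IsLower x.2

/-- Componentwise commutator on `𝔄`. -/
def pcomm (x y : DOp × DOp) : DOp × DOp := (dcomm x.1 y.1, dcomm x.2 y.2)

/-- Trace pairing `⟨(X,X̄),(Y,Ȳ)⟩ = tr(XY) + tr(X̄Ȳ)` on `𝔄`. -/
def ip (x y : DOp × DOp) : ℂ := dtr (dmul x.1 y.1) + dtr (dmul x.2 y.2)

/-- The first Poisson tensor `P₁` on `𝔄`, at the point `Lp = (L, L̄)`,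
evaluated on the covector `x = (X, X̄)`. -/
def P1T (Lp x : DOp × DOp) : DOp × DOp :=
  (dcomm Lp.1 (dneg x.1 - dneg x.2)
      - truncLe 0 (dcomm Lp.1 x.1 + dcomm Lp.2 x.2),
   dcomm Lp.2 (dpos x.2 - dpos x.1)
      - truncGt 0 (dcomm Lp.1 x.1 + dcomm Lp.2 x.2))

/-- The second Poisson tensor `P₂` on `𝔄`. -/
def P2T (Lp x : DOp × DOp) : DOp × DOp :=
  ((1 / 2 : ℂ) •
      (dcomm Lp.1 (dneg (dmul Lp.1 x.1 + dmul x.1 Lp.1)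
            - dneg (dmul Lp.2 x.2 + dmul x.2 Lp.2))
        - dmul Lp.1 (truncLe 0 (dcomm Lp.1 x.1 + dcomm Lp.2 x.2))
        - dmul (truncLe 0 (dcomm Lp.1 x.1 + dcomm Lp.2 x.2)) Lp.1),
   (1 / 2 : ℂ) •
      (dcomm Lp.2 (dpos (dmul Lp.2 x.2 + dmul x.2 Lp.2)
            - dpos (dmul Lp.1 x.1 + dmul x.1 Lp.1))
        - dmul Lp.2 (truncGt 0 (dcomm Lp.1 x.1 + dcomm Lp.2 x.2))
        - dmul (truncGt 0 (dcomm Lp.1 x.1 + dcomm Lp.2 x.2)) Lp.2))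

/-- The third Poisson tensor `P₃` on `𝔄`. -/
def P3T (Lp x : DOp × DOp) : DOp × DOp :=
  (dcomm Lp.1 (dneg (dmul (dmul Lp.1 x.1) Lp.1 - dmul (dmul Lp.2 x.2) Lp.2))
      - dmul (dmul Lp.1 (truncLe 0 (dcomm Lp.1 x.1 + dcomm Lp.2 x.2))) Lp.1,
   dcomm Lp.2 (dpos (dmul (dmul Lp.2 x.2) Lp.2 - dmul (dmul Lp.1 x.1) Lp.1))
      - dmul (dmul Lp.2 (truncGt 0 (dcomm Lp.1 x.1 + dcomm Lp.2 x.2))) Lp.2)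

/-- The covector `Λ^{−i} δ_n` (the differential of the coordinate function `u_i(n)`):
its only nonzero coefficient sits in degree `−i` and is the function `p ↦ δ(p − i − n)`. -/
def covec (i n : ℤ) : DOp := fun k p => if k = -i ∧ p = n + i then 1 else 0

lemma dmul_zero_left (Y : DOp) : dmul 0 Y = 0 := by
  funext k p; simp [dmul]

lemma dmul_zero_right (X : DOp) : dmul X 0 = 0 := by
  funext k p; simp [dmul]

lemma dtr_zero : dtr 0 = 0 := by simp [dtr]

lemma dcomm_zero_right (X : DOp) : dcomm X 0 = 0 := by
  simp [dcomm, dmul_zero_left, dmul_zero_right]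

lemma covec_apply (i n k p : ℤ) :
    covec i n k p = if k = -i ∧ p = n + i then 1 else 0 := rfl

lemma dneg_covec (j m : ℤ) (hj : j ≤ 0) : dneg (covec j m) = 0 := by
  funext k p
  simp only [dneg, truncLt, covec, Pi.zero_apply]
  split_ifs with h1 h2 <;> first | rfl | omega

lemma dneg_zero : dneg (0 : DOp) = 0 := by
  funext k p; simp [dneg, truncLt]

lemma dtr_dmul_covec (i n : ℤ) (Y : DOp) : dtr (dmul (covec i n) Y) = Y i n := by
  have h1 : ∀ p, dmul (covec i n) Y 0 p = (if p = n + i then (1:ℂ) else 0) * Y i n := by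
    intro p
    rw [dmul, finsum_eq_single _ (-i)]
    · by_cases hp : p = n + i
      · subst hp
        rw [covec_apply, if_pos ⟨rfl, rfl⟩, if_pos rfl]
        simp
      · rw [covec_apply, if_neg (by tauto), if_neg hp, zero_mul, zero_mul]
    · intro k hk
      rw [covec_apply, if_neg (by omega), zero_mul]
  rw [dtr]
  rw [finsum_congr h1, finsum_eq_single _ (n + i)]
  · simp
  · intro p hp; simp [hp]

/-- coordinate form of the first Poisson bracket. At a point with
`L_{≥1} = Λ` and `L̄_{≤−2} = 0`, for `i, j ≤ 0`,
`{u_i(n), u_j(m)}₁ = ⟨ξ, P₁ η⟩ = u_{i+j}(m) δ(n−m−j) − u_{i+j}(n) δ(n−m+i)`,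
where `ξ = (Λ^{−i}δ_n, 0)`, `η = (Λ^{−j}δ_m, 0)` and `u_k` is the coefficient of `Λᵏ`
in `L`. -/
theorem first_bracket_coordinate_form (L Lb : DOp)
    (hL : truncGe 1 L = dlam) (hLb : truncLe (-2) Lb = 0)
    (i j : ℤ) (hi : i ≤ 0) (hj : j ≤ 0) (n m : ℤ) :
    ip (covec i n, 0) (P1T (L, Lb) (covec j m, 0))
      = (if n - m - j = 0 then L (i + j) m else 0)
        - (if n - m + i = 0 then L (i + j) n else 0) := by
  have hXneg : dneg (covec j m) = 0 := dneg_covec j m hj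
  have key : ip (covec i n, 0) (P1T (L, Lb) (covec j m, 0))
      = dtr (dmul (covec i n)
          (dcomm L (dneg (covec j m) - dneg 0)
            - truncLe 0 (dcomm L (covec j m) + dcomm Lb 0))) := by
    simp [ip, P1T, dmul_zero_left, dtr_zero]
  rw [key, hXneg, dneg_zero, sub_self, dcomm_zero_right, dcomm_zero_right, add_zero,
    dtr_dmul_covec]
  have h2 : ((0 : DOp) - truncLe 0 (dcomm L (covec j m))) i n
      = -(dcomm L (covec j m) i n) := by
    simp [truncLe, hi]
  rw [h2]
  have hA : dmul L (covec j m) i n = if n - m + i = 0 then L (i + j) n else 0 := by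
    rw [dmul, finsum_eq_single _ (i + j)]
    · rw [covec_apply]
      have hiff : (i - (i + j) = -j ∧ n + (i + j) = m + j) ↔ n - m + i = 0 := by omega
      simp only [hiff]
      split_ifs <;> simp
    · intro k hk
      rw [covec_apply, if_neg (by omega), mul_zero]
  have hB : dmul (covec j m) L i n = if n - m - j = 0 then L (i + j) m else 0 := by
    rw [dmul, finsum_eq_single _ (-j)]
    · rw [covec_apply]
      by_cases hc : n = m + j
      · subst hc
        rw [if_pos ⟨rfl, rfl⟩, if_pos (by omega), one_mul]
        congr 1 <;> ring
      · rw [if_neg (by tauto), if_neg (by omega), zero_mul]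
    · intro k hk
      rw [covec_apply, if_neg (by omega), zero_mul]
  rw [dcomm]
  simp only [Pi.sub_apply]
  rw [hA, hB]
  ring
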